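/- arXiv:2002.05995 — 6 statements merged into one kernel-verified Lean document; each statement's English description precedes it below -/
import Mathlib

section
/- Let Ẑ¹, Ẑ² ∈ [0,1] with Ẑ¹·Ẑ² ≠ 1, and let ŵ³ ∈ [0,1). Then the linear system 1−w¹ = (1−ŵ³) − Ẑ²(1−w²), 1−w² = (1−ŵ³) − Ẑ¹(1−w¹), Z³(1−ŵ³) = Ẑ¹(1−w¹) + Ẑ²(1−w²) has a unique solution (w¹, w², Z³), given by 1−w¹ = ((1−Ẑ²)/(1−Ẑ¹Ẑ²))(1−ŵ³), 1−w² = ((1−Ẑ¹)/(1−Ẑ¹Ẑ²))(1−ŵ³), and Z³ = (Ẑ¹ + Ẑ² − 2Ẑ¹Ẑ²)/(1−Ẑ¹Ẑ²). -/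
/-- The fair-merging kinetic coupling system in characteristic variables
has a unique solution `(w¹, w², Z³)`, given by the explicit formulas. -/
theorem stmt6 (Z1 Z2 w3 : ℝ)
    (hZ1 : Z1 ∈ Set.Icc (0 : ℝ) 1) (hZ2 : Z2 ∈ Set.Icc (0 : ℝ) 1)
    (hne : Z1 * Z2 ≠ 1) (hw3 : w3 ∈ Set.Ico (0 : ℝ) 1) :
    (∃! s : ℝ × ℝ × ℝ,
      1 - s.1 = (1 - w3) - Z2 * (1 - s.2.1) ∧
      1 - s.2.1 = (1 - w3) - Z1 * (1 - s.1) ∧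
      s.2.2 * (1 - w3) = Z1 * (1 - s.1) + Z2 * (1 - s.2.1)) ∧
    (∀ w1 w2 Z3 : ℝ,
      (1 - w1 = (1 - w3) - Z2 * (1 - w2) ∧
       1 - w2 = (1 - w3) - Z1 * (1 - w1) ∧
       Z3 * (1 - w3) = Z1 * (1 - w1) + Z2 * (1 - w2)) →
      1 - w1 = (1 - Z2) / (1 - Z1 * Z2) * (1 - w3) ∧
      1 - w2 = (1 - Z1) / (1 - Z1 * Z2) * (1 - w3) ∧
      Z3 = (Z1 + Z2 - 2 * Z1 * Z2) / (1 - Z1 * Z2)) := by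
  have hD : (1 : ℝ) - Z1 * Z2 ≠ 0 := sub_ne_zero.2 (Ne.symm hne)
  have hw : (1 : ℝ) - w3 ≠ 0 := sub_ne_zero.2 (ne_of_gt hw3.2).symm.symm
  have hkey : ∀ w1 w2 Z3 : ℝ,
      (1 - w1 = (1 - w3) - Z2 * (1 - w2) ∧
       1 - w2 = (1 - w3) - Z1 * (1 - w1) ∧
       Z3 * (1 - w3) = Z1 * (1 - w1) + Z2 * (1 - w2)) →
      1 - w1 = (1 - Z2) / (1 - Z1 * Z2) * (1 - w3) ∧
      1 - w2 = (1 - Z1) / (1 - Z1 * Z2) * (1 - w3) ∧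
      Z3 = (Z1 + Z2 - 2 * Z1 * Z2) / (1 - Z1 * Z2) := by
    rintro w1 w2 Z3 ⟨h1, h2, h3⟩
    have e1 : 1 - w1 = (1 - Z2) / (1 - Z1 * Z2) * (1 - w3) := by
      rw [div_mul_eq_mul_div, eq_div_iff hD]
      linear_combination h1 - Z2 * h2
    have e2 : 1 - w2 = (1 - Z1) / (1 - Z1 * Z2) * (1 - w3) := by
      field_simp
      linear_combination h2 - Z1 * h1
    refine ⟨e1, e2, ?_⟩
    have : Z3 * (1 - w3) = (Z1 + Z2 - 2 * Z1 * Z2) / (1 - Z1 * Z2) * (1 - w3) := by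
      rw [h3, e1, e2]; field_simp; ring
    exact mul_right_cancel₀ hw this
  refine ⟨?_, hkey⟩
  refine ⟨⟨1 - (1 - Z2) / (1 - Z1 * Z2) * (1 - w3),
          1 - (1 - Z1) / (1 - Z1 * Z2) * (1 - w3),
          (Z1 + Z2 - 2 * Z1 * Z2) / (1 - Z1 * Z2)⟩, ⟨?_, ?_, ?_⟩, ?_⟩
  · simp only; have key : (1 - Z1 * Z2) * (1 - Z1 * Z2)⁻¹ = 1 := mul_inv_cancel₀ hD; linear_combination (1 - w3) * key
  · simp only; field_simp; ring
  · simp only; field_simp; ring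
  · rintro ⟨w1, w2, Z3⟩ h
    obtain ⟨e1, e2, e3⟩ := hkey w1 w2 Z3 h
    simp only [Prod.mk.injEq]
    refine ⟨by linarith, by linarith, e3⟩
end

section
/- Let F : ℝ → ℝ be continuously differentiable on [0,1] and strictly concave on [0,1] with F(0) = F(1) = 0. Then F′(1) < 0, and for all ρ ∈ [0,1): F(ρ)/(1 − ρ + F(ρ)) ≤ −F′(1)/(1 − F′(1)). Consequently, for every δ with 0 ≤ δ ≤ 1/(1 − F′(1)) one has 1 − δ ≥ F(ρ)/(1 − ρ + F(ρ)) for all ρ ∈ [0,1). -/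
/-- For a continuously differentiable, strictly concave fundamental diagram
`F` on `[0,1]` with `F 0 = F 1 = 0`: `F' 1 < 0`, the equilibrium Riemann invariant
satisfies `F ρ / (1 - ρ + F ρ) ≤ -F' 1 / (1 - F' 1)` for all `ρ ∈ [0,1)`, and hence for
every `0 ≤ δ ≤ 1/(1 - F' 1)` one has `1 - δ ≥ F ρ / (1 - ρ + F ρ)` on `[0,1)`. -/
theorem stmt10 (F F' : ℝ → ℝ)
    (hderiv : ∀ ρ ∈ Set.Icc (0 : ℝ) 1, HasDerivAt F (F' ρ) ρ)
    (hC1 : ContinuousOn F' (Set.Icc 0 1))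
    (hconc : StrictConcaveOn ℝ (Set.Icc 0 1) F)
    (h0 : F 0 = 0) (h1 : F 1 = 0) :
    F' 1 < 0 ∧
    (∀ ρ ∈ Set.Ico (0 : ℝ) 1, F ρ / (1 - ρ + F ρ) ≤ -F' 1 / (1 - F' 1)) ∧
    (∀ δ : ℝ, 0 ≤ δ → δ ≤ 1 / (1 - F' 1) →
      ∀ ρ ∈ Set.Ico (0 : ℝ) 1, F ρ / (1 - ρ + F ρ) ≤ 1 - δ) := by
  have h0mem : (0 : ℝ) ∈ Set.Icc (0 : ℝ) 1 := by constructor <;> norm_num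
  have h1mem : (1 : ℝ) ∈ Set.Icc (0 : ℝ) 1 := by constructor <;> norm_num
  -- F is nonnegative on [0,1]
  have hFnonneg : ∀ ρ ∈ Set.Icc (0 : ℝ) 1, 0 ≤ F ρ := by
    intro ρ hρ
    have := hconc.concaveOn.2 h0mem h1mem
      (show (0:ℝ) ≤ 1 - ρ by linarith [hρ.2]) (show (0:ℝ) ≤ ρ from hρ.1) (by ring)
    simpa [h0, h1] using this
  -- F is positive at 1/2
  have hFhalf : 0 < F (1/2 : ℝ) := by
    have := hconc.2 h0mem h1mem (show (0:ℝ) ≠ 1 by norm_num)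
      (show (0:ℝ) < 1/2 by norm_num) (show (0:ℝ) < 1/2 by norm_num) (by norm_num)
    simpa [h0, h1] using this
  -- derivative bound via slopes: F' 1 < slope from ρ to 1
  have hslope : ∀ ρ ∈ Set.Ico (0 : ℝ) 1, F' 1 < -(F ρ) / (1 - ρ) := by
    intro ρ hρ
    have hmem : ρ ∈ Set.Icc (0 : ℝ) 1 := ⟨hρ.1, le_of_lt hρ.2⟩
    have h := hconc.lt_slope_of_hasDerivAt hmem h1mem hρ.2 (hderiv 1 h1mem)
    have heq : slope F ρ 1 = -(F ρ) / (1 - ρ) := by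
      rw [slope_def_field, h1]; ring_nf
    rwa [heq] at h
  have hneg : F' 1 < 0 := by
    have := hslope (1/2 : ℝ) ⟨by norm_num, by norm_num⟩
    have h2 : -(F (1/2 : ℝ)) / (1 - 1/2) < 0 := by
      apply div_neg_of_neg_of_pos <;> [linarith; norm_num]
    linarith
  have hm : (0:ℝ) < 1 - F' 1 := by linarith
  -- main inequality
  have hmain : ∀ ρ ∈ Set.Ico (0 : ℝ) 1, F ρ / (1 - ρ + F ρ) ≤ -F' 1 / (1 - F' 1) := by
    intro ρ hρ
    have hd : (0:ℝ) < 1 - ρ := by linarith [hρ.2]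
    have hF : 0 ≤ F ρ := hFnonneg ρ ⟨hρ.1, le_of_lt hρ.2⟩
    have hs := hslope ρ hρ
    -- F ρ ≤ (-F' 1) * (1 - ρ)
    have hkey : F ρ ≤ (-F' 1) * (1 - ρ) := by
      have h' := (lt_div_iff₀ hd).mp hs
      nlinarith
    rw [div_le_div_iff₀ (by linarith) hm]
    nlinarith [hkey]
  refine ⟨hneg, hmain, fun δ hδ0 hδ1 ρ hρ => ?_⟩
  have h2 : -F' 1 / (1 - F' 1) ≤ 1 - δ := by
    rw [div_le_iff₀ hm]
    have : δ * (1 - F' 1) ≤ 1 := by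
      have := mul_le_mul_of_nonneg_right hδ1 (le_of_lt hm)
      rwa [one_div, inv_mul_cancel₀ (ne_of_gt hm)] at this
    nlinarith
  exact le_trans (hmain ρ hρ) h2
end

section
/- Let 0 < C < σ and define g : ℝ → ℝ by g(u) = (1 − u)(F(u) − C)/C. If ρ : ℝ → ℝ is differentiable on [0,∞), satisfies ρ′(y) = g(ρ(y)) for all y ≥ 0, and ρ₋(C) < ρ(0) < 1, then ρ₋(C) < ρ(y) < 1 for all y ≥ 0 and ρ(y) → ρ₊(C) as y → ∞; that is, ρ₊(C) is a stable fixpoint of the left boundary layer equation with domain of attraction (ρ₋(C), 1). -/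
open Set Filter

/-- Barrier lemma: a function with positive derivative whenever its value is in
`(v, v+η)` cannot reach `≤ v` from above. -/
lemma aux_no_reach_down (f : ℝ → ℝ) (a b v η : ℝ) (hab : a ≤ b) (hη : 0 < η)
    (hcont : ∀ y ∈ Set.Icc a b, ContinuousAt f y)
    (hfa : v < f a)
    (hderiv : ∀ y, a < y → y < b → v < f y → f y < v + η → 0 < deriv f y) :
    ∀ y ∈ Set.Icc a b, v < f y := by
  by_contra h
  push_neg at h
  obtain ⟨w, hw, hwv⟩ := h
  set S : Set ℝ := Set.Icc a b ∩ f ⁻¹' Set.Iic v with hSdef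
  have hSne : S.Nonempty := ⟨w, hw, hwv⟩
  have hfc : ContinuousOn f (Set.Icc a b) := fun y hy => (hcont y hy).continuousWithinAt
  have hScl : IsClosed S := hfc.preimage_isClosed_of_isClosed isClosed_Icc isClosed_Iic
  have hSbd : BddBelow S := ⟨a, fun y hy => hy.1.1⟩
  set y₁ := sInf S with hy₁def
  have hy₁S : y₁ ∈ S := hScl.csInf_mem hSne hSbd
  have hy₁ab : y₁ ∈ Set.Icc a b := hy₁S.1
  have hfy₁ : f y₁ ≤ v := hy₁S.2
  have hay₁ : a < y₁ := by
    rcases lt_or_eq_of_le hy₁ab.1 with h | h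
    · exact h
    · exfalso; rw [← h] at hfy₁; linarith
  have hlt : ∀ y, a ≤ y → y < y₁ → v < f y := by
    intro y hya hy
    by_contra hc
    push_neg at hc
    have : y₁ ≤ y := csInf_le hSbd ⟨⟨hya, le_trans hy.le hy₁ab.2⟩, hc⟩
    linarith
  -- continuity at y₁ gives δ with f y < v + η near y₁
  have hεpos : 0 < v + η - f y₁ := by linarith
  obtain ⟨δ, hδpos, hδ⟩ := Metric.continuousAt_iff.mp (hcont y₁ hy₁ab) _ hεpos
  set m := min δ (y₁ - a) with hm
  have hmpos : 0 < m := lt_min hδpos (by linarith)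
  set c := y₁ - m / 2 with hc
  have hac : a < c := by
    have : m ≤ y₁ - a := min_le_right _ _
    simp only [hc]; linarith
  have hcy₁ : c < y₁ := by simp only [hc]; linarith
  have hsub : Set.Icc c y₁ ⊆ Set.Icc a b :=
    Set.Icc_subset_Icc hac.le hy₁ab.2
  have hsm : StrictMonoOn f (Set.Icc c y₁) := by
    apply strictMonoOn_of_deriv_pos (convex_Icc c y₁) (hfc.mono hsub)
    intro z hz
    rw [interior_Icc] at hz
    have hza : a < z := lt_trans hac hz.1
    have hzb : z < b := lt_of_lt_of_le hz.2 hy₁ab.2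
    have hzv : v < f z := hlt z hza.le hz.2
    have hzdist : dist z y₁ < δ := by
      rw [Real.dist_eq, abs_of_nonpos (by linarith [hz.2.le] : z - y₁ ≤ 0)]
      have : m ≤ δ := min_le_left _ _
      simp only [hc] at hz
      linarith [hz.1]
    have : f z < v + η := by
      have := hδ hzdist
      rw [Real.dist_eq] at this
      have := abs_lt.mp this
      linarith [this.1, this.2]
    exact hderiv z hza hzb hzv this
  have h1 : f c < f y₁ := hsm ⟨le_rfl, hcy₁.le⟩ ⟨hcy₁.le, le_rfl⟩ hcy₁
  have h2 : v < f c := hlt c hac.le hcy₁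
  linarith

/-- Mirror of `aux_no_reach_down`. -/
lemma aux_no_reach_up (f : ℝ → ℝ) (a b v η : ℝ) (hab : a ≤ b) (hη : 0 < η)
    (hcont : ∀ y ∈ Set.Icc a b, ContinuousAt f y)
    (hfa : f a < v)
    (hderiv : ∀ y, a < y → y < b → v - η < f y → f y < v → deriv f y < 0) :
    ∀ y ∈ Set.Icc a b, f y < v := by
  have key := aux_no_reach_down (fun y => -f y) a b (-v) η hab hη
    (fun y hy => (hcont y hy).neg)
    (by simpa using hfa)
    (by
      intro y hy1 hy2 h1 h2
      have hd : deriv (fun y => -f y) y = -deriv f y := deriv.neg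
      rw [hd]
      have h1' : -v < -f y := h1
      have h2' : -f y < -v + η := h2
      have : deriv f y < 0 := hderiv y hy1 hy2 (by linarith) (by linarith)
      linarith)
  intro y hy
  have h' : -v < -f y := key y hy
  linarith

/-- Convergence lemma for a bounded monotone-increasing autonomous ODE solution. -/
lemma aux_conv_up (f G : ℝ → ℝ) (A b : ℝ)
    (hA : A < f 0) (h0b : f 0 < b)
    (hode : ∀ y ∈ Set.Ici (0:ℝ), HasDerivAt f (G (f y)) y)
    (hband : ∀ y ∈ Set.Ici (0:ℝ), A < f y ∧ f y < b)
    (hGpos : ∀ u, A < u → u < b → 0 < G u)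
    (hGcont : ∀ u, A < u → u < b → ContinuousAt G u) :
    Filter.Tendsto f Filter.atTop (nhds b) := by
  have hcont : ∀ y ∈ Set.Ici (0:ℝ), ContinuousAt f y := fun y hy => (hode y hy).continuousAt
  have hderiv : ∀ y : ℝ, 0 < y → 0 < deriv f y := by
    intro y hy
    rw [(hode y hy.le).deriv]
    exact hGpos _ (hband y hy.le).1 (hband y hy.le).2
  have hmono : StrictMonoOn f (Set.Ici 0) := by
    apply strictMonoOn_of_deriv_pos (convex_Ici 0)
      (fun y hy => (hcont y hy).continuousWithinAt)
    intro y hy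
    rw [interior_Ici] at hy
    exact hderiv y hy
  set φ : ℝ → ℝ := fun y => f (max y 0) with hφ
  have hφmono : Monotone φ := fun x y hxy =>
    hmono.monotoneOn (le_max_right x 0) (le_max_right y 0) (max_le_max hxy le_rfl)
  have hφbdd : BddAbove (Set.range φ) := by
    refine ⟨b, ?_⟩
    rintro _ ⟨y, rfl⟩
    exact (hband _ (le_max_right y 0)).2.le
  have htend' : Filter.Tendsto φ Filter.atTop (nhds (⨆ y, φ y)) :=
    tendsto_atTop_ciSup hφmono hφbdd
  set L := ⨆ y, φ y with hL
  have heq : φ =ᶠ[Filter.atTop] f := by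
    filter_upwards [Filter.eventually_ge_atTop (0:ℝ)] with y hy
    simp [hφ, max_eq_left hy]
  have htend : Filter.Tendsto f Filter.atTop (nhds L) := htend'.congr' heq
  have hLle : L ≤ b := ciSup_le fun y => (hband _ (le_max_right y 0)).2.le
  have hf0L : f 0 ≤ L := by
    have := le_ciSup hφbdd (0:ℝ)
    simpa [hφ] using this
  rcases eq_or_lt_of_le hLle with h | hLb
  · rw [← h]; exact htend
  exfalso
  have hAL : A < L := lt_of_lt_of_le hA hf0L
  have hGL : 0 < G L := hGpos L hAL hLb
  have hev : ∀ᶠ u in nhds L, G L / 2 < G u :=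
    (hGcont L hAL hLb).eventually (eventually_gt_nhds (by linarith))
  have hev2 : ∀ᶠ y in Filter.atTop, G L / 2 < G (f y) := htend.eventually hev
  obtain ⟨y₀, hy₀⟩ := Filter.eventually_atTop.mp (hev2.and (Filter.eventually_ge_atTop 0))
  have hy₀0 : (0:ℝ) ≤ y₀ := (hy₀ y₀ le_rfl).2
  set ε := G L / 2 with hε
  have hεpos : 0 < ε := half_pos hGL
  have hkey : ∀ y, y₀ ≤ y → f y₀ + ε * (y - y₀) ≤ f y := by
    intro y hy
    have hmono2 : MonotoneOn (fun z => f z - ε * z) (Set.Ici y₀) := by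
      apply monotoneOn_of_deriv_nonneg (convex_Ici y₀)
      · intro z hz
        exact ((hcont z (le_trans hy₀0 hz)).sub
          ((continuous_const.mul continuous_id).continuousAt)).continuousWithinAt
      · intro z hz
        rw [interior_Ici] at hz
        have hz0 : (0:ℝ) ≤ z := le_trans hy₀0 hz.le
        exact (((hode z hz0).sub ((hasDerivAt_id z).const_mul ε)).differentiableAt).differentiableWithinAt
      · intro z hz
        rw [interior_Ici] at hz
        have hz0 : (0:ℝ) ≤ z := le_trans hy₀0 hz.le
        have hd : HasDerivAt (fun z => f z - ε * z) (G (f z) - ε * 1) z :=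
          (hode z hz0).sub ((hasDerivAt_id z).const_mul ε)
        rw [hd.deriv]
        have := (hy₀ z hz.le).1
        simp only [mul_one]
        linarith
    have := hmono2 (Set.self_mem_Ici) hy hy
    simp only at this
    linarith
  set Y := y₀ + (b - f y₀) / ε + 1 with hY
  have hfb : f y₀ < b := (hband y₀ hy₀0).2
  have hYy₀ : y₀ ≤ Y := by
    have : 0 ≤ (b - f y₀) / ε := div_nonneg (by linarith) hεpos.le
    simp only [hY]; linarith
  have h1 := hkey Y hYy₀
  have h2 : f Y < b := (hband Y (le_trans hy₀0 hYy₀)).2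
  have hc : ε * (Y - y₀) = (b - f y₀) + ε := by
    simp only [hY]
    field_simp
    ring
  nlinarith

/-- For `0 < C < σ`, `ρ₊(C)` is a stable fixpoint of the left boundary
layer equation `ρ' = (1-ρ)(F(ρ)-C)/C` with domain of attraction `(ρ₋(C), 1)`: any
solution starting in `(ρ₋(C),1)` stays there and converges to `ρ₊(C)` as `y → ∞`. -/
theorem stmt13 (F : ℝ → ℝ) (ρstar σ : ℝ) (ρminus ρplus : ℝ → ℝ)
    (hcont : ContinuousOn F (Set.Icc 0 1))
    (hconc : StrictConcaveOn ℝ (Set.Icc 0 1) F)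
    (h0 : F 0 = 0) (h1 : F 1 = 0)
    (hρstar : ρstar ∈ Set.Ioo (0 : ℝ) 1)
    (hmax : ∀ ρ ∈ Set.Icc (0 : ℝ) 1, ρ ≠ ρstar → F ρ < F ρstar)
    (hσ : σ = F ρstar) (hσpos : 0 < σ)
    (hminus : ∀ C, 0 < C → C < σ → ρminus C ∈ Set.Ioo 0 ρstar ∧ F (ρminus C) = C)
    (hplus : ∀ C, 0 < C → C < σ → ρplus C ∈ Set.Ioo ρstar 1 ∧ F (ρplus C) = C)
    (C : ℝ) (hC0 : 0 < C) (hCσ : C < σ)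
    (ρ : ℝ → ℝ)
    (hODE : ∀ y ∈ Set.Ici (0 : ℝ),
      HasDerivAt ρ ((1 - ρ y) * (F (ρ y) - C) / C) y)
    (hinit : ρminus C < ρ 0 ∧ ρ 0 < 1) :
    (∀ y ∈ Set.Ici (0 : ℝ), ρminus C < ρ y ∧ ρ y < 1) ∧
    Filter.Tendsto ρ Filter.atTop (nhds (ρplus C)) := by
  obtain ⟨⟨hm0, hms⟩, hFm⟩ := hminus C hC0 hCσ
  obtain ⟨⟨hsp, hp1⟩, hFp⟩ := hplus C hC0 hCσ
  have hs0 : 0 < ρstar := hρstar.1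
  have hs1 : ρstar < 1 := hρstar.2
  have hmp : ρminus C < ρplus C := lt_trans hms hsp
  -- F > C on (ρminus C, ρplus C)
  have hFgt : ∀ u, ρminus C < u → u < ρplus C → C < F u := by
    intro u hu1 hu2
    set t := (ρplus C - u) / (ρplus C - ρminus C) with ht
    have hden : 0 < ρplus C - ρminus C := by linarith
    have ht0 : 0 < t := div_pos (by linarith) hden
    have ht1 : t < 1 := (div_lt_one hden).mpr (by linarith)
    have hcomb : t * ρminus C + (1 - t) * ρplus C = u := by
      rw [ht, one_sub_div hden.ne', div_mul_eq_mul_div, div_mul_eq_mul_div, ← add_div, div_eq_iff hden.ne']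
      ring
    have key := hconc.2 (x := ρminus C) ⟨hm0.le, by linarith⟩
      (y := ρplus C) ⟨by linarith, hp1.le⟩ (by linarith : ρminus C ≠ ρplus C)
      ht0 (by linarith : (0:ℝ) < 1 - t) (by ring)
    simp only [smul_eq_mul] at key
    rw [hFm, hFp, hcomb] at key
    have : t * C + (1 - t) * C = C := by ring
    linarith
  -- F < C on (ρplus C, 1)
  have hFlt : ∀ u, ρplus C < u → u < 1 → F u < C := by
    intro u hu1 hu2
    have hden : 0 < u - ρstar := by linarith
    set a := (u - ρplus C) / (u - ρstar) with ha
    set b := (ρplus C - ρstar) / (u - ρstar) with hb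
    have ha0 : 0 < a := div_pos (by linarith) hden
    have hb0 : 0 < b := div_pos (by linarith) hden
    have hab : a + b = 1 := by rw [ha, hb, ← add_div, div_eq_one_iff_eq hden.ne']; ring
    have hcomb : a * ρstar + b * u = ρplus C := by
      rw [ha, hb, div_mul_eq_mul_div, div_mul_eq_mul_div, ← add_div, div_eq_iff hden.ne']
      ring
    have key := hconc.2 (x := ρstar) ⟨hs0.le, hs1.le⟩
      (y := u) ⟨by linarith, hu2.le⟩ (by linarith : ρstar ≠ u)
      ha0 hb0 hab
    simp only [smul_eq_mul] at key
    rw [hcomb, hFp, ← hσ] at key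
    nlinarith
  have hcontρ : ∀ y : ℝ, 0 ≤ y → ContinuousAt ρ y := fun y hy => (hODE y hy).continuousAt
  have hderivρ : ∀ y : ℝ, 0 ≤ y → deriv ρ y = (1 - ρ y) * (F (ρ y) - C) / C :=
    fun y hy => (hODE y hy).deriv
  -- the global band
  have hband : ∀ y ∈ Set.Ici (0:ℝ), ρminus C < ρ y ∧ ρ y < 1 := by
    intro Y hY
    constructor
    · refine aux_no_reach_down ρ 0 Y (ρminus C) (ρplus C - ρminus C) hY (by linarith)
        (fun y hy => hcontρ y hy.1) hinit.1 ?_ Y ⟨hY, le_rfl⟩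
      intro y hy0 hyY hv1 hv2
      rw [hderivρ y hy0.le]
      have hltp : ρ y < ρplus C := by linarith
      have := hFgt (ρ y) hv1 hltp
      exact div_pos (mul_pos (by linarith) (by linarith)) hC0
    · refine aux_no_reach_up ρ 0 Y 1 (1 - ρplus C) hY (by linarith)
        (fun y hy => hcontρ y hy.1) hinit.2 ?_ Y ⟨hY, le_rfl⟩
      intro y hy0 hyY hv1 hv2
      rw [hderivρ y hy0.le]
      have hgtp : ρplus C < ρ y := by linarith
      have := hFlt (ρ y) hgtp hv2
      exact div_neg_of_neg_of_pos (mul_neg_of_pos_of_neg (by linarith) (by linarith)) hC0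
  refine ⟨hband, ?_⟩
  -- forward invariance lemmas
  have hInv1 : ∀ y₀, 0 ≤ y₀ → ρ y₀ ≤ ρplus C → ∀ y, y₀ ≤ y → ρ y ≤ ρplus C := by
    intro y₀ hy₀ hle y hy
    by_contra hgt
    push_neg at hgt
    have key := aux_no_reach_up ρ y₀ y (ρ y) (ρ y - ρplus C) hy (by linarith)
      (fun z hz => hcontρ z (le_trans hy₀ hz.1)) (by linarith) ?_ y ⟨hy, le_rfl⟩
    · exact absurd key (lt_irrefl _)
    intro z hz1 hz2 h1 h2
    have hz0 : (0:ℝ) ≤ z := le_trans hy₀ hz1.le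
    rw [hderivρ z hz0]
    have h1' : ρplus C < ρ z := by linarith
    have hzlt1 : ρ z < 1 := (hband z hz0).2
    have := hFlt (ρ z) h1' hzlt1
    exact div_neg_of_neg_of_pos (mul_neg_of_pos_of_neg (by linarith) (by linarith)) hC0
  have hInv2 : ∀ y₀, 0 ≤ y₀ → ρplus C ≤ ρ y₀ → ∀ y, y₀ ≤ y → ρplus C ≤ ρ y := by
    intro y₀ hy₀ hle y hy
    by_contra hgt
    push_neg at hgt
    have key := aux_no_reach_down ρ y₀ y (ρ y) (ρplus C - ρ y) hy (by linarith)
      (fun z hz => hcontρ z (le_trans hy₀ hz.1)) (by linarith) ?_ y ⟨hy, le_rfl⟩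
    · exact absurd key (lt_irrefl _)
    intro z hz1 hz2 h1 h2
    have hz0 : (0:ℝ) ≤ z := le_trans hy₀ hz1.le
    rw [hderivρ z hz0]
    have h1' : ρminus C < ρ z := (hband z hz0).1
    have h2' : ρ z < ρplus C := by linarith
    have := hFgt (ρ z) h1' h2'
    exact div_pos (mul_pos (by linarith) (by linarith)) hC0
  -- trichotomy
  by_cases hcase1 : ∀ y ∈ Set.Ici (0:ℝ), ρ y < ρplus C
  · -- monotone increasing case
    exact aux_conv_up ρ (fun u => (1 - u) * (F u - C) / C) (ρminus C) (ρplus C)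
      hinit.1 (hcase1 0 Set.self_mem_Ici) hODE
      (fun y hy => ⟨(hband y hy).1, hcase1 y hy⟩)
      (by
        intro u hu1 hu2
        have := hFgt u hu1 hu2
        exact div_pos (mul_pos (by linarith) (by linarith)) hC0)
      (by
        intro u hu1 hu2
        have hu0 : 0 < u := lt_trans hm0 hu1
        have hu1' : u < 1 := lt_trans hu2 hp1
        have hFc : ContinuousAt F u := hcont.continuousAt (Icc_mem_nhds hu0 hu1')
        exact ((continuousAt_const.sub continuousAt_id).mul
          (hFc.sub continuousAt_const)).div_const C)
  by_cases hcase2 : ∀ y ∈ Set.Ici (0:ℝ), ρplus C < ρ y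
  · -- monotone decreasing case via negation
    have key := aux_conv_up (fun y => -ρ y)
      (fun u => -((1 - -u) * (F (-u) - C) / C)) (-1) (-(ρplus C))
      (by simpa using hinit.2) (by simpa using hcase2 0 Set.self_mem_Ici)
      (by
        intro y hy
        have h := (hODE y hy).neg
        simpa [neg_neg, Pi.neg_def] using h)
      (by
        intro y hy
        constructor
        · simpa using (hband y hy).2
        · simpa using hcase2 y hy)
      (by
        intro u hu1 hu2
        have h1' : ρplus C < -u := by linarith
        have h2' : -u < 1 := by linarith
        have := hFlt (-u) h1' h2'
        have : (1 - -u) * (F (-u) - C) / C < 0 :=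
          div_neg_of_neg_of_pos (mul_neg_of_pos_of_neg (by linarith) (by linarith)) hC0
        linarith)
      (by
        intro u hu1 hu2
        have h0 : 0 < -u := by linarith [lt_trans hs0 hsp]
        have h1' : -u < 1 := by linarith
        have hnegc : ContinuousAt (fun u : ℝ => -u) u := continuousAt_id.neg
        have hFc : ContinuousAt F (-u) := hcont.continuousAt (Icc_mem_nhds h0 h1')
        have hFcu : ContinuousAt (fun u : ℝ => F (-u)) u := hFc.comp hnegc
        exact (((continuousAt_const.sub hnegc).mul
          (hFcu.sub continuousAt_const)).div_const C).neg)
    have := key.neg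
    simpa using this
  -- hitting case
  push_neg at hcase1 hcase2
  obtain ⟨p, hp0, hpge⟩ := hcase1
  obtain ⟨q, hq0, hqle⟩ := hcase2
  have hIVT : ∃ y₀, 0 ≤ y₀ ∧ ρ y₀ = ρplus C := by
    rcases le_total p q with hpq | hpq
    · have hc : ContinuousOn ρ (Set.Icc p q) :=
        fun z hz => (hcontρ z (le_trans hp0 hz.1)).continuousWithinAt
      have := intermediate_value_Icc' hpq hc (a := p) (b := q)
      have hmem : ρplus C ∈ Set.Icc (ρ q) (ρ p) := ⟨hqle, hpge⟩
      obtain ⟨y₀, hy₀, hval⟩ := this hmem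
      exact ⟨y₀, le_trans hp0 hy₀.1, hval⟩
    · have hc : ContinuousOn ρ (Set.Icc q p) :=
        fun z hz => (hcontρ z (le_trans hq0 hz.1)).continuousWithinAt
      have := intermediate_value_Icc hpq hc (a := q) (b := p)
      have hmem : ρplus C ∈ Set.Icc (ρ q) (ρ p) := ⟨hqle, hpge⟩
      obtain ⟨y₀, hy₀, hval⟩ := this hmem
      exact ⟨y₀, le_trans hq0 hy₀.1, hval⟩
  obtain ⟨y₀, hy₀0, hy₀⟩ := hIVT
  have hconst : ∀ y, y₀ ≤ y → ρ y = ρplus C := fun y hy =>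
    le_antisymm (hInv1 y₀ hy₀0 hy₀.le y hy) (hInv2 y₀ hy₀0 hy₀.ge y hy)
  refine Filter.Tendsto.congr' ?_ tendsto_const_nhds
  filter_upwards [Filter.eventually_ge_atTop y₀] with y hy
  exact (hconst y hy).symm
end

section
/- Let 0 < C < σ and define g : ℝ → ℝ by g(u) = (1 − u)(F(u) − C)/C. If ρ : ℝ → ℝ is differentiable on [0,∞), satisfies ρ′(y) = −g(ρ(y)) for all y ≥ 0, and 0 ≤ ρ(0) < ρ₊(C), then 0 ≤ ρ(y) < ρ₊(C) for all y ≥ 0 and ρ(y) → ρ₋(C) as y → ∞; that is, ρ₋(C) is a stable fixpoint of the right boundary layer equation with domain of attraction [0, ρ₊(C)). -/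
open Set Filter

/-- Strict concavity: at an interior point between two points, `F` exceeds the min
of the endpoint values. -/
lemma stmt14_aux_min_lt {F : ℝ → ℝ} (hconc : StrictConcaveOn ℝ (Set.Icc (0:ℝ) 1) F)
    {x y z : ℝ} (hx : x ∈ Set.Icc (0:ℝ) 1) (hy : y ∈ Set.Icc (0:ℝ) 1)
    (hxz : x < z) (hzy : z < y) : min (F x) (F y) < F z := by
  have hxy : x < y := hxz.trans hzy
  have hyx : 0 < y - x := by linarith
  have ha : 0 < (y - z) / (y - x) := div_pos (by linarith) hyx
  have hb : 0 < (z - x) / (y - x) := div_pos (by linarith) hyx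
  have hab : (y - z) / (y - x) + (z - x) / (y - x) = 1 := by field_simp; ring
  have h := hconc.2 hx hy (ne_of_lt hxy) ha hb hab
  have hz : ((y - z) / (y - x)) • x + ((z - x) / (y - x)) • y = z := by
    rw [smul_eq_mul, smul_eq_mul]
    field_simp
    ring
  rw [hz] at h
  simp only [smul_eq_mul] at h
  have h1 := min_le_left (F x) (F y)
  have h2 := min_le_right (F x) (F y)
  have h3 : (y - z) / (y - x) * min (F x) (F y) + (z - x) / (y - x) * min (F x) (F y)
      = min (F x) (F y) := by rw [← add_mul, hab, one_mul]
  have h4 := mul_le_mul_of_nonneg_left h1 ha.le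
  have h5 := mul_le_mul_of_nonneg_left h2 hb.le
  linarith

/-- For `0 < C < σ`, `ρ₋(C)` is a stable fixpoint of the right boundary
layer equation `ρ' = -(1-ρ)(F(ρ)-C)/C` with domain of attraction `[0, ρ₊(C))`: any
solution starting in `[0,ρ₊(C))` stays there and converges to `ρ₋(C)` as `y → ∞`. -/
theorem stmt14 (F : ℝ → ℝ) (ρstar σ : ℝ) (ρminus ρplus : ℝ → ℝ)
    (hcont : ContinuousOn F (Set.Icc 0 1))
    (hconc : StrictConcaveOn ℝ (Set.Icc 0 1) F)
    (h0 : F 0 = 0) (h1 : F 1 = 0)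
    (hρstar : ρstar ∈ Set.Ioo (0 : ℝ) 1)
    (hmax : ∀ ρ ∈ Set.Icc (0 : ℝ) 1, ρ ≠ ρstar → F ρ < F ρstar)
    (hσ : σ = F ρstar) (hσpos : 0 < σ)
    (hminus : ∀ C, 0 < C → C < σ → ρminus C ∈ Set.Ioo 0 ρstar ∧ F (ρminus C) = C)
    (hplus : ∀ C, 0 < C → C < σ → ρplus C ∈ Set.Ioo ρstar 1 ∧ F (ρplus C) = C)
    (C : ℝ) (hC0 : 0 < C) (hCσ : C < σ)
    (ρ : ℝ → ℝ)
    (hODE : ∀ y ∈ Set.Ici (0 : ℝ),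
      HasDerivAt ρ (-((1 - ρ y) * (F (ρ y) - C) / C)) y)
    (hinit : 0 ≤ ρ 0 ∧ ρ 0 < ρplus C) :
    (∀ y ∈ Set.Ici (0 : ℝ), 0 ≤ ρ y ∧ ρ y < ρplus C) ∧
    Filter.Tendsto ρ Filter.atTop (nhds (ρminus C)) := by
  obtain ⟨hinit0, hinitp⟩ := hinit
  obtain ⟨⟨hm0, hms⟩, hmF⟩ := hminus C hC0 hCσ
  obtain ⟨⟨hps, hp1⟩, hpF⟩ := hplus C hC0 hCσ
  set ρm := ρminus C with hρm_def
  set ρp := ρplus C with hρp_def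
  have hstar0 := hρstar.1
  have hstar1 := hρstar.2
  have hm1 : ρm < 1 := hms.trans hstar1
  have hp0 : 0 < ρp := hstar0.trans hps
  have hmp : ρm < ρp := hms.trans hps
  have hmI : ρm ∈ Set.Icc (0:ℝ) 1 := ⟨hm0.le, hm1.le⟩
  have hpI : ρp ∈ Set.Icc (0:ℝ) 1 := ⟨hp0.le, hp1.le⟩
  -- sign facts for F
  have f1 : ∀ u, 0 ≤ u → u < ρm → F u < C := by
    intro u hu0 hum
    by_contra h
    push_neg at h
    have hsI : ρstar ∈ Set.Icc (0:ℝ) 1 := ⟨hstar0.le, hstar1.le⟩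
    have huI : u ∈ Set.Icc (0:ℝ) 1 := ⟨hu0, by linarith⟩
    have hlt := stmt14_aux_min_lt hconc huI hsI hum hms
    rw [hmF] at hlt
    have hCσ' : C ≤ F ρstar := by rw [← hσ]; linarith
    have := le_min h hCσ'
    linarith
  have f2 : ∀ u, ρm < u → u < ρp → C < F u := by
    intro u hu1 hu2
    have hlt := stmt14_aux_min_lt hconc hmI hpI hu1 hu2
    rwa [hmF, hpF, min_self] at hlt
  -- sign facts for the vector field
  have Gneg : ∀ u, ρm < u → u < ρp → -((1 - u) * (F u - C) / C) < 0 := by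
    intro u hu1 hu2
    have hF := f2 u hu1 hu2
    have h1u : 0 < 1 - u := by linarith
    have : 0 < (1 - u) * (F u - C) / C := div_pos (mul_pos h1u (by linarith)) hC0
    linarith
  have Gnonneg : ∀ u, 0 ≤ u → u ≤ ρm → 0 ≤ -((1 - u) * (F u - C) / C) := by
    intro u hu0 hum
    rcases hum.lt_or_eq with h | h
    · have hF := f1 u hu0 h
      have h1u : 0 < 1 - u := by linarith
      have : (1 - u) * (F u - C) / C < 0 :=
        div_neg_of_neg_of_pos (mul_neg_of_pos_of_neg h1u (by linarith)) hC0
      linarith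
    · rw [h, hmF]; simp
  have Gpos : ∀ u, 0 ≤ u → u < ρm → 0 < -((1 - u) * (F u - C) / C) := by
    intro u hu0 hum
    have hF := f1 u hu0 hum
    have h1u : 0 < 1 - u := by linarith
    have : (1 - u) * (F u - C) / C < 0 :=
      div_neg_of_neg_of_pos (mul_neg_of_pos_of_neg h1u (by linarith)) hC0
    linarith
  -- continuity of ρ
  have hρc : ∀ y, 0 ≤ y → ContinuousAt ρ y := fun y hy => (hODE y hy).continuousAt
  have hρco : ∀ a b : ℝ, 0 ≤ a → ContinuousOn ρ (Set.Icc a b) := fun a b ha x hx =>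
    (hρc x (ha.trans hx.1)).continuousWithinAt
  -- MVT helper
  have mvt : ∀ a b : ℝ, 0 ≤ a → a < b → ∃ c, a < c ∧ c < b ∧
      ρ b - ρ a = -((1 - ρ c) * (F (ρ c) - C) / C) * (b - a) := by
    intro a b ha hab
    obtain ⟨c, hc, hc2⟩ := exists_hasDerivAt_eq_slope ρ
      (fun x => -((1 - ρ x) * (F (ρ x) - C) / C)) hab (hρco a b ha)
      (fun x hx => hODE x (by simp only [Set.mem_Ici]; linarith [hx.1]))
    exact ⟨c, hc.1, hc.2, by
      rw [hc2, div_mul_cancel₀ _ (sub_ne_zero.mpr hab.ne')]⟩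
  -- Claim A: ρ stays below ρp
  have claimA : ∀ y, 0 ≤ y → ρ y < ρp := by
    by_contra h
    push_neg at h
    obtain ⟨y₁, hy₁0, hy₁⟩ := h
    set S := Set.Icc (0:ℝ) y₁ ∩ ρ ⁻¹' Set.Ici ρp with hS_def
    have hSc : IsClosed S :=
      (hρco 0 y₁ le_rfl).preimage_isClosed_of_isClosed isClosed_Icc isClosed_Ici
    have hSne : S.Nonempty := ⟨y₁, ⟨hy₁0, le_rfl⟩, hy₁⟩
    have hSbd : BddBelow S := ⟨0, fun x hx => hx.1.1⟩
    set T := sInf S with hT_def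
    have hTS : T ∈ S := hSc.csInf_mem hSne hSbd
    have hT0 : 0 ≤ T := hTS.1.1
    have hTy : T ≤ y₁ := hTS.1.2
    have hρT : ρp ≤ ρ T := hTS.2
    have hTpos : 0 < T := by
      rcases hT0.lt_or_eq with h' | h'
      · exact h'
      · exfalso; rw [← h'] at hρT; linarith
    have hev : ∀ᶠ y in nhds T, ρm < ρ y :=
      (hρc T hT0).eventually (eventually_gt_nhds (by linarith))
    rw [Metric.eventually_nhds_iff] at hev
    obtain ⟨δ, hδ, hδ'⟩ := hev
    set p := T - min (δ/2) (T/2) with hp_def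
    have hmin_pos : 0 < min (δ/2) (T/2) := lt_min (by linarith) (by linarith)
    have hmin_le1 : min (δ/2) (T/2) ≤ δ/2 := min_le_left _ _
    have hmin_le2 : min (δ/2) (T/2) ≤ T/2 := min_le_right _ _
    have hp0' : 0 < p := by simp only [hp_def]; linarith
    have hpT : p < T := by simp only [hp_def]; linarith
    obtain ⟨c, hc1, hc2, hc3⟩ := mvt p T hp0'.le hpT
    have hcd : dist c T < δ := by
      rw [Real.dist_eq, abs_of_nonpos (by linarith)]
      simp only [hp_def] at hc1
      linarith
    have hcm : ρm < ρ c := hδ' hcd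
    have hcp : ρ c < ρp := by
      by_contra hcc
      push_neg at hcc
      have hcS : c ∈ S := ⟨⟨by linarith, by linarith⟩, hcc⟩
      have := csInf_le hSbd hcS
      rw [← hT_def] at this
      linarith
    have hpp : ρ p < ρp := by
      by_contra hcc
      push_neg at hcc
      have hpS : p ∈ S := ⟨⟨hp0'.le, by linarith⟩, hcc⟩
      have := csInf_le hSbd hpS
      rw [← hT_def] at this
      linarith
    have hGneg := Gneg (ρ c) hcm hcp
    have := mul_neg_of_neg_of_pos hGneg (sub_pos.mpr hpT)
    linarith
  -- Claim 0: ρ stays nonneg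
  have claim0 : ∀ y, 0 ≤ y → 0 ≤ ρ y := by
    by_contra h
    push_neg at h
    obtain ⟨y₁, hy₁0, hy₁⟩ := h
    set S := Set.Icc (0:ℝ) y₁ ∩ ρ ⁻¹' Set.Ici 0 with hS_def
    have hSc : IsClosed S :=
      (hρco 0 y₁ le_rfl).preimage_isClosed_of_isClosed isClosed_Icc isClosed_Ici
    have hSne : S.Nonempty := ⟨0, ⟨le_rfl, hy₁0⟩, hinit0⟩
    have hSbd : BddAbove S := ⟨y₁, fun x hx => hx.1.2⟩
    set T := sSup S with hT_def
    have hTS : T ∈ S := hSc.csSup_mem hSne hSbd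
    have hT0 : 0 ≤ T := hTS.1.1
    have hTy : T ≤ y₁ := hTS.1.2
    have hρT : (0:ℝ) ≤ ρ T := hTS.2
    have hTy' : T < y₁ := by
      rcases hTy.lt_or_eq with h' | h'
      · exact h'
      · exfalso; rw [h'] at hρT; linarith
    have hafter : ∀ y, T < y → y ≤ y₁ → ρ y < 0 := by
      intro y hy1 hy2
      by_contra hcc
      push_neg at hcc
      have hyS : y ∈ S := ⟨⟨by linarith, hy2⟩, hcc⟩
      have := le_csSup hSbd hyS
      rw [← hT_def] at this
      linarith
    have hT00 : ρ T = 0 := by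
      refine le_antisymm ?_ hρT
      refine le_of_tendsto ((hρc T hT0).tendsto.mono_left nhdsWithin_le_nhds :
        Tendsto ρ (nhdsWithin T (Set.Ioi T)) (nhds (ρ T))) ?_
      filter_upwards [Ioc_mem_nhdsGT_of_mem ⟨le_rfl, hTy'⟩] with y hy
      exact (hafter y hy.1 hy.2).le
    have hd : HasDerivAt ρ 1 T := by
      have hd0 := hODE T hT0
      rw [hT00] at hd0
      have : -((1 - (0:ℝ)) * (F 0 - C) / C) = 1 := by
        rw [h0]; field_simp; ring
      rwa [this] at hd0
    rw [hasDerivAt_iff_tendsto_slope] at hd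
    have hd' : Tendsto (slope ρ T) (nhdsWithin T (Set.Ioi T)) (nhds 1) :=
      hd.mono_left (nhdsWithin_mono T (fun x hx => ne_of_gt hx))
    have hev : ∀ᶠ y in nhdsWithin T (Set.Ioi T), 0 < slope ρ T y :=
      hd'.eventually (eventually_gt_nhds one_pos)
    have hev2 : Set.Ioc T y₁ ∈ nhdsWithin T (Set.Ioi T) :=
      Ioc_mem_nhdsGT_of_mem ⟨le_rfl, hTy'⟩
    obtain ⟨y, hy1, hy2⟩ := (hev.and (eventually_of_mem hev2 (fun _ h => h))).exists
    have hyneg : ρ y < 0 := hafter y hy2.1 hy2.2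
    rw [slope_def_field] at hy1
    have hyT : 0 < y - T := sub_pos.mpr hy2.1
    have := mul_pos hy1 hyT
    rw [div_mul_cancel₀ _ hyT.ne'] at this
    rw [hT00] at this
    linarith
  -- Claim B: once ≤ ρm, always ≤ ρm
  have claimB : ∀ a, 0 ≤ a → ρ a ≤ ρm → ∀ y, a ≤ y → ρ y ≤ ρm := by
    intro a ha hρa
    by_contra h
    push_neg at h
    obtain ⟨y₁, hy₁a, hy₁⟩ := h
    set S := Set.Icc a y₁ ∩ ρ ⁻¹' Set.Iic ρm with hS_def
    have hSc : IsClosed S :=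
      (hρco a y₁ ha).preimage_isClosed_of_isClosed isClosed_Icc isClosed_Iic
    have hSne : S.Nonempty := ⟨a, ⟨le_rfl, hy₁a⟩, hρa⟩
    have hSbd : BddAbove S := ⟨y₁, fun x hx => hx.1.2⟩
    set T := sSup S with hT_def
    have hTS : T ∈ S := hSc.csSup_mem hSne hSbd
    have hTa : a ≤ T := hTS.1.1
    have hTy : T ≤ y₁ := hTS.1.2
    have hρT : ρ T ≤ ρm := hTS.2
    have hTy' : T < y₁ := by
      rcases hTy.lt_or_eq with h' | h'
      · exact h'
      · exfalso; rw [h'] at hρT; linarith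
    obtain ⟨c, hc1, hc2, hc3⟩ := mvt T y₁ (ha.trans hTa) hTy'
    have hcm : ρm < ρ c := by
      by_contra hcc
      push_neg at hcc
      have hcS : c ∈ S := ⟨⟨by linarith, by linarith⟩, hcc⟩
      have := le_csSup hSbd hcS
      rw [← hT_def] at this
      linarith
    have hcp : ρ c < ρp := claimA c (by linarith)
    have hGneg := Gneg (ρ c) hcm hcp
    have := mul_neg_of_neg_of_pos hGneg (sub_pos.mpr hTy')
    linarith
  refine ⟨fun y hy => ⟨claim0 y hy, claimA y hy⟩, ?_⟩
  -- convergence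
  by_cases hcase : ∃ a, 0 ≤ a ∧ ρ a ≤ ρm
  · -- Case 1: ρ reaches [0, ρm]; then it is nondecreasing and converges up to ρm
    obtain ⟨a, ha0, haρ⟩ := hcase
    have hub : ∀ y, a ≤ y → ρ y ≤ ρm := claimB a ha0 haρ
    have hinc : ∀ x y, a ≤ x → x ≤ y → ρ x ≤ ρ y := by
      intro x y hx hxy
      rcases hxy.lt_or_eq with h | h
      · obtain ⟨c, hc1, hc2, hc3⟩ := mvt x y (ha0.trans hx) h
        have hc0 : 0 ≤ ρ c := claim0 c (by linarith)
        have hcm : ρ c ≤ ρm := hub c (by linarith)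
        have hG := Gnonneg (ρ c) hc0 hcm
        nlinarith
      · rw [h]
    set f : ℝ → ℝ := fun y => ρ (max y a) with hf_def
    have hmono : Monotone f := fun x y hxy =>
      hinc _ _ (le_max_right _ _) (max_le_max hxy le_rfl)
    have hbdd : BddAbove (Set.range f) := by
      refine ⟨ρm, ?_⟩
      rintro _ ⟨y, rfl⟩
      exact hub _ (le_max_right y a)
    have htend : Tendsto f atTop (nhds (⨆ y, f y)) := tendsto_atTop_ciSup hmono hbdd
    set L := ⨆ y, f y with hL_def
    have htρ : Tendsto ρ atTop (nhds L) := by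
      refine htend.congr' ?_
      filter_upwards [eventually_ge_atTop a] with y hy
      simp only [hf_def, max_eq_left hy]
    have hLm : L ≤ ρm := ciSup_le (fun y => hub _ (le_max_right y a))
    have hρL : ∀ y, a ≤ y → ρ y ≤ L := by
      intro y hy
      have := le_ciSup hbdd y
      rw [← hL_def] at this
      simpa only [hf_def, max_eq_left hy] using this
    have hLeq : L = ρm := by
      by_contra hne
      have hLlt : L < ρm := hLm.lt_of_ne hne
      have hρaL : ρ a ≤ L := hρL a le_rfl
      have hρa0 : 0 ≤ ρ a := claim0 a ha0
      have hKsub : Set.Icc (ρ a) L ⊆ Set.Icc (0:ℝ) 1 := fun u hu =>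
        ⟨hρa0.trans hu.1, by linarith [hu.2]⟩
      have hgc : ContinuousOn (fun u => (1 - u) * (F u - C) / C) (Set.Icc (ρ a) L) :=
        ((continuousOn_const.sub continuousOn_id).mul
          ((hcont.mono hKsub).sub continuousOn_const)).div_const C
      obtain ⟨x₀, hx₀K, hx₀max⟩ := isCompact_Icc.exists_isMaxOn
        (Set.nonempty_Icc.mpr hρaL) hgc
      have hx₀0 : 0 ≤ x₀ := hρa0.trans hx₀K.1
      have hx₀m : x₀ < ρm := lt_of_le_of_lt hx₀K.2 hLlt
      have hε : (1 - x₀) * (F x₀ - C) / C < 0 :=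
        div_neg_of_neg_of_pos
          (mul_neg_of_pos_of_neg (by linarith) (by linarith [f1 x₀ hx₀0 hx₀m])) hC0
      set ε := -((1 - x₀) * (F x₀ - C) / C) with hε_def
      have hεpos : 0 < ε := by simp only [hε_def]; linarith
      set Y := a + (ρm - ρ a + 1) / ε with hY_def
      have hYa : a < Y := by
        have : 0 < (ρm - ρ a + 1) / ε := div_pos (by linarith) hεpos
        simp only [hY_def]; linarith
      obtain ⟨c, hc1, hc2, hc3⟩ := mvt a Y ha0 hYa
      have hcK : ρ c ∈ Set.Icc (ρ a) L := ⟨hinc a c le_rfl hc1.le, hρL c hc1.le⟩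
      have hmin := hx₀max hcK
      have hεY : ε * (Y - a) = ρm - ρ a + 1 := by
        have hYA : Y - a = (ρm - ρ a + 1) / ε := by simp only [hY_def]; ring
        rw [hYA, mul_comm, div_mul_cancel₀ _ hεpos.ne']
      have h5 : ε * (Y - a) ≤ -((1 - ρ c) * (F (ρ c) - C) / C) * (Y - a) := by
        apply mul_le_mul_of_nonneg_right _ (by linarith : (0:ℝ) ≤ Y - a)
        simp only [hε_def]
        exact neg_le_neg hmin
      have hY2 := hub Y hYa.le
      have h6 : ρm - ρ a + 1 ≤ ρ Y - ρ a := by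
        rw [← hεY, hc3]
        exact h5
      linarith
    rw [hρm_def] at hLeq
    rwa [hLeq] at htρ
  · -- Case 2: ρ stays above ρm; then it is decreasing and converges down to ρm
    push_neg at hcase
    have hlb : ∀ y, 0 ≤ y → ρm < ρ y := hcase
    have hdec : ∀ x y, 0 ≤ x → x ≤ y → ρ y ≤ ρ x := by
      intro x y hx hxy
      rcases hxy.lt_or_eq with h | h
      · obtain ⟨c, hc1, hc2, hc3⟩ := mvt x y hx h
        have hcm := hlb c (by linarith)
        have hcp := claimA c (by linarith)
        have hG := Gneg (ρ c) hcm hcp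
        nlinarith
      · rw [h]
    set f : ℝ → ℝ := fun y => ρ (max y 0) with hf_def
    have hanti : Antitone f := fun x y hxy =>
      hdec _ _ (le_max_right _ _) (max_le_max hxy le_rfl)
    have hbdd : BddBelow (Set.range f) := by
      refine ⟨ρm, ?_⟩
      rintro _ ⟨y, rfl⟩
      exact (hlb _ (le_max_right y 0)).le
    have htend : Tendsto f atTop (nhds (⨅ y, f y)) := tendsto_atTop_ciInf hanti hbdd
    set L := ⨅ y, f y with hL_def
    have htρ : Tendsto ρ atTop (nhds L) := by
      refine htend.congr' ?_
      filter_upwards [eventually_ge_atTop (0:ℝ)] with y hy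
      simp only [hf_def, max_eq_left hy]
    have hLm : ρm ≤ L := le_ciInf (fun y => (hlb _ (le_max_right y 0)).le)
    have hρL : ∀ y, 0 ≤ y → L ≤ ρ y := by
      intro y hy
      have := ciInf_le hbdd y
      rw [← hL_def] at this
      simpa only [hf_def, max_eq_left hy] using this
    have hLeq : L = ρm := by
      by_contra hne
      have hLgt : ρm < L := hLm.lt_of_ne (Ne.symm hne)
      have hLρ0 : L ≤ ρ 0 := hρL 0 le_rfl
      have hρ0p : ρ 0 < ρp := claimA 0 le_rfl
      have hKsub : Set.Icc L (ρ 0) ⊆ Set.Icc (0:ℝ) 1 := fun u hu =>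
        ⟨by linarith [hu.1], by linarith [hu.2]⟩
      have hgc : ContinuousOn (fun u => (1 - u) * (F u - C) / C) (Set.Icc L (ρ 0)) :=
        ((continuousOn_const.sub continuousOn_id).mul
          ((hcont.mono hKsub).sub continuousOn_const)).div_const C
      obtain ⟨x₀, hx₀K, hx₀min⟩ := isCompact_Icc.exists_isMinOn
        (Set.nonempty_Icc.mpr hLρ0) hgc
      have hx₀m : ρm < x₀ := lt_of_lt_of_le hLgt hx₀K.1
      have hx₀p : x₀ < ρp := lt_of_le_of_lt hx₀K.2 hρ0p
      have hε : 0 < (1 - x₀) * (F x₀ - C) / C :=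
        div_pos (mul_pos (by linarith) (by linarith [f2 x₀ hx₀m hx₀p])) hC0
      set ε := (1 - x₀) * (F x₀ - C) / C with hε_def
      set Y := (ρ 0 - ρm + 1) / ε with hY_def
      have hY0 : 0 < Y := div_pos (by linarith) hε
      obtain ⟨c, hc1, hc2, hc3⟩ := mvt 0 Y le_rfl hY0
      have hcK : ρ c ∈ Set.Icc L (ρ 0) := ⟨hρL c hc1.le, hdec 0 c le_rfl hc1.le⟩
      have hmin := hx₀min hcK
      have hεY : ε * Y = ρ 0 - ρm + 1 := by
        simp only [hY_def]
        rw [mul_comm, div_mul_cancel₀ _ hε.ne']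
      have h5 : -((1 - ρ c) * (F (ρ c) - C) / C) * (Y - 0) ≤ -ε * (Y - 0) := by
        apply mul_le_mul_of_nonneg_right _ (by linarith : (0:ℝ) ≤ Y - 0)
        exact neg_le_neg hmin
      have hY2 := hlb Y hY0.le
      have h7 : -ε * (Y - 0) = -(ρ 0 - ρm + 1) := by
        have h8 : ε * (Y - 0) = ρ 0 - ρm + 1 := by rw [sub_zero]; exact hεY
        linarith [h8]
      have h6 : ρ Y - ρ 0 ≤ -(ρ 0 - ρm + 1) := by
        rw [hc3]
        exact h5.trans (le_of_eq h7)
      linarith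
    rw [hρm_def] at hLeq
    rwa [hLeq] at htρ
end

section
/- Let 0 < C < σ and define g : ℝ → ℝ by g(u) = (1 − u)(F(u) − C)/C. If ρ : ℝ → ℝ is differentiable on [0,∞), satisfies ρ′(y) = g(ρ(y)) and 0 ≤ ρ(y) ≤ 1 for all y ≥ 0, and ρ(y) → ρ₋(C) as y → ∞, then ρ(y) = ρ₋(C) for all y ≥ 0; that is, the only left layer solution with asymptotic state equal to the unstable fixpoint ρ₋(C) is the constant solution. -/
lemma barrier {f d : ℝ → ℝ} {y₀ b : ℝ}
    (hf : ∀ y ∈ Set.Ici y₀, HasDerivAt f (d y) y)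
    (hb : f y₀ ≤ b)
    (hd : ∀ y ∈ Set.Ici y₀, f y = b → d y < 0) :
    ∀ y ∈ Set.Ici y₀, f y ≤ b := by
  intro y₁ hy₁
  by_contra hcon
  push_neg at hcon
  have hy01 : y₀ < y₁ := by
    rcases eq_or_lt_of_le (Set.mem_Ici.mp hy₁ : y₀ ≤ y₁) with h | h
    · exact absurd hb (by rw [h]; exact not_le.mpr hcon)
    · exact h
  set S : Set ℝ := Set.Icc y₀ y₁ ∩ f ⁻¹' Set.Iic b with hS
  have hSne : S.Nonempty := ⟨y₀, ⟨le_refl _, hy01.le⟩, hb⟩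
  have hSbdd : BddAbove S := ⟨y₁, fun y hy => hy.1.2⟩
  have hfc : ContinuousOn f (Set.Icc y₀ y₁) := fun y hy =>
    ((hf y hy.1).continuousAt).continuousWithinAt
  have hSclosed : IsClosed S := by
    exact ContinuousOn.preimage_isClosed_of_isClosed hfc isClosed_Icc isClosed_Iic
  set s := sSup S with hs
  have hsS : s ∈ S := hSclosed.csSup_mem hSne hSbdd
  have hsle : s ≤ y₁ := hsS.1.2
  have hsge : y₀ ≤ s := hsS.1.1
  have hsne : s ≠ y₁ := by
    intro h
    exact absurd hsS.2 (by simp [h, not_le.mpr hcon])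
  have hslt : s < y₁ := lt_of_le_of_ne hsle hsne
  -- For y in (s, y₁], f y > b
  have hgt : ∀ y ∈ Set.Ioc s y₁, b < f y := by
    intro y hy
    by_contra h
    push_neg at h
    have : y ∈ S := ⟨⟨hsge.trans hy.1.le, hy.2⟩, h⟩
    exact absurd (le_csSup hSbdd this) (not_le.mpr hy.1)
  -- f s = b
  have hfs : f s = b := by
    have h1 : f s ≤ b := hsS.2
    have hca : ContinuousAt f s := (hf s hsge).continuousAt
    have htend : Filter.Tendsto f (nhdsWithin s (Set.Ioi s)) (nhds (f s)) :=
      hca.continuousWithinAt.tendsto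
    have hev : ∀ᶠ y in nhdsWithin s (Set.Ioi s), b ≤ f y := by
      filter_upwards [Ioc_mem_nhdsGT_of_mem ⟨le_refl s, hslt⟩] with y hy
      exact (hgt y hy).le
    have h2 : b ≤ f s := ge_of_tendsto htend hev
    linarith
  have hds : d s < 0 := hd s hsge hfs
  have hslope : Filter.Tendsto (slope f s) (nhdsWithin s {s}ᶜ) (nhds (d s)) :=
    hasDerivAt_iff_tendsto_slope.mp (hf s hsge)
  have hslope' : Filter.Tendsto (slope f s) (nhdsWithin s (Set.Ioi s)) (nhds (d s)) :=
    hslope.mono_left (nhdsWithin_mono s (fun y hy => ne_of_gt hy))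
  have hev2 : ∀ᶠ y in nhdsWithin s (Set.Ioi s), slope f s y < 0 :=
    hslope'.eventually_lt_const hds
  have hev3 : ∀ᶠ y in nhdsWithin s (Set.Ioi s), y ∈ Set.Ioc s y₁ :=
    Ioc_mem_nhdsGT_of_mem ⟨le_refl s, hslt⟩
  have : ∃ y, slope f s y < 0 ∧ y ∈ Set.Ioc s y₁ :=
    (hev2.and hev3).exists
  obtain ⟨y, hsl, hy⟩ := this
  have hys : 0 < y - s := sub_pos.mpr hy.1
  rw [slope_def_field] at hsl
  have hneg : f y - f s < 0 := by
    rcases div_neg_iff.mp hsl with ⟨h1, h2⟩ | ⟨h1, h2⟩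
    · linarith
    · linarith
  have hb2 := hgt y hy
  rw [hfs] at hneg
  linarith


/-- For `0 < C < σ`, the only solution of the left layer equation
`ρ' = (1-ρ)(F(ρ)-C)/C` with values in `[0,1]` whose asymptotic state is the unstable
fixpoint `ρ₋(C)` is the constant solution `ρ ≡ ρ₋(C)`. -/
theorem stmt15 (F : ℝ → ℝ) (ρstar σ : ℝ) (ρminus ρplus : ℝ → ℝ)
    (hcont : ContinuousOn F (Set.Icc 0 1))
    (hconc : StrictConcaveOn ℝ (Set.Icc 0 1) F)
    (h0 : F 0 = 0) (h1 : F 1 = 0)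
    (hρstar : ρstar ∈ Set.Ioo (0 : ℝ) 1)
    (hmax : ∀ ρ ∈ Set.Icc (0 : ℝ) 1, ρ ≠ ρstar → F ρ < F ρstar)
    (hσ : σ = F ρstar) (hσpos : 0 < σ)
    (hminus : ∀ C, 0 < C → C < σ → ρminus C ∈ Set.Ioo 0 ρstar ∧ F (ρminus C) = C)
    (hplus : ∀ C, 0 < C → C < σ → ρplus C ∈ Set.Ioo ρstar 1 ∧ F (ρplus C) = C)
    (C : ℝ) (hC0 : 0 < C) (hCσ : C < σ)
    (ρ : ℝ → ℝ)
    (hODE : ∀ y ∈ Set.Ici (0 : ℝ),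
      HasDerivAt ρ ((1 - ρ y) * (F (ρ y) - C) / C) y)
    (hbounds : ∀ y ∈ Set.Ici (0 : ℝ), 0 ≤ ρ y ∧ ρ y ≤ 1)
    (hlim : Filter.Tendsto ρ Filter.atTop (nhds (ρminus C))) :
    ∀ y ∈ Set.Ici (0 : ℝ), ρ y = ρminus C := by
  obtain ⟨⟨hm0, hmstar⟩, hFm⟩ := hminus C hC0 hCσ
  obtain ⟨⟨hpstar, hp1⟩, hFp⟩ := hplus C hC0 hCσ
  set ρm := ρminus C with hρm
  set ρp := ρplus C with hρp
  have hstar1 : ρstar < 1 := hρstar.2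
  have hstar0 : 0 < ρstar := hρstar.1
  have hm1 : ρm < 1 := lt_trans hmstar hstar1
  have hmp : ρm < ρp := lt_trans hmstar hpstar
  -- Fact 1 : for 0 ≤ b < ρm, F b < C
  have fact1 : ∀ b, 0 ≤ b → b < ρm → F b < C := by
    intro b hb0 hbm
    have hbstar : b < ρstar := lt_trans hbm hmstar
    have hbI : b ∈ Set.Icc (0:ℝ) 1 := ⟨hb0, le_of_lt (lt_trans hbstar hstar1)⟩
    have hsI : ρstar ∈ Set.Icc (0:ℝ) 1 := ⟨hstar0.le, hstar1.le⟩
    set t : ℝ := (ρstar - ρm) / (ρstar - b) with ht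
    have hden : 0 < ρstar - b := sub_pos.mpr hbstar
    have ht0 : 0 < t := div_pos (sub_pos.mpr hmstar) hden
    have ht1 : t < 1 := (div_lt_one hden).mpr (by linarith)
    have hcomb : t * b + (1 - t) * ρstar = ρm := by
      have e : t * (ρstar - b) = ρstar - ρm := by rw [ht]; exact div_mul_cancel₀ _ hden.ne'
      linear_combination -e
    have := hconc.2 hbI hsI (ne_of_lt hbstar) ht0 (by linarith : (0:ℝ) < 1 - t)
      (by ring)
    simp only [smul_eq_mul] at this
    rw [hcomb, hFm] at this
    have hσC : C < F ρstar := by rw [← hσ]; exact hCσ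
    nlinarith
  -- Fact 2 : for ρm < a < ρp, C < F a
  have fact2 : ∀ a, ρm < a → a < ρp → C < F a := by
    intro a hma hap
    have hmI : ρm ∈ Set.Icc (0:ℝ) 1 := ⟨hm0.le, hm1.le⟩
    have hpI : ρp ∈ Set.Icc (0:ℝ) 1 := ⟨(lt_trans hstar0 hpstar).le, hp1.le⟩
    set t : ℝ := (ρp - a) / (ρp - ρm) with ht
    have hden : 0 < ρp - ρm := sub_pos.mpr hmp
    have ht0 : 0 < t := div_pos (sub_pos.mpr hap) hden
    have ht1 : t < 1 := (div_lt_one hden).mpr (by linarith)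
    have hcomb : t * ρm + (1 - t) * ρp = a := by
      have e : t * (ρp - ρm) = ρp - a := by rw [ht]; exact div_mul_cancel₀ _ hden.ne'
      linear_combination -e
    have := hconc.2 hmI hpI (ne_of_lt hmp) ht0 (by linarith : (0:ℝ) < 1 - t)
      (by ring)
    simp only [smul_eq_mul] at this
    rw [hcomb, hFm, hFp] at this
    nlinarith
  intro y₀ hy₀
  by_contra hne
  rcases lt_or_gt_of_ne hne with hlt | hgt
  · -- ρ y₀ < ρm : barrier from above, ρ stays ≤ ρ y₀
    set b := ρ y₀ with hbdef
    have hIci : Set.Ici y₀ ⊆ Set.Ici (0:ℝ) := fun y hy => Set.mem_Ici.mpr (le_trans (Set.mem_Ici.mp hy₀) (Set.mem_Ici.mp hy))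
    have hbar : ∀ y ∈ Set.Ici y₀, ρ y ≤ b := by
      refine barrier (fun y hy => hODE y (hIci hy)) (le_refl b) ?_
      intro y hy hρy
      have hb0 : 0 ≤ b := (hbounds y₀ hy₀).1
      have hFb : F b < C := fact1 b hb0 hlt
      rw [hρy]
      apply div_neg_of_neg_of_pos _ hC0
      have : 0 < 1 - b := by linarith
      nlinarith
    have : ρm ≤ b := le_of_tendsto hlim
      (Filter.eventually_atTop.mpr ⟨y₀, fun y hy => hbar y hy⟩)
    linarith
  · -- ρ y₀ > ρm : barrier from below at a = min (ρ y₀) ((ρm+ρp)/2)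
    set a := min (ρ y₀) ((ρm + ρp) / 2) with ha
    have hma : ρm < a := lt_min hgt (by linarith)
    have hap : a < ρp := lt_of_le_of_lt (min_le_right _ _) (by linarith)
    have ha1 : a < 1 := lt_trans hap hp1
    have hIci : Set.Ici y₀ ⊆ Set.Ici (0:ℝ) := fun y hy => Set.mem_Ici.mpr (le_trans (Set.mem_Ici.mp hy₀) (Set.mem_Ici.mp hy))
    have hbar : ∀ y ∈ Set.Ici y₀, -ρ y ≤ -a := by
      refine barrier (d := fun y => -((1 - ρ y) * (F (ρ y) - C) / C))
        (fun y hy => (hODE y (hIci hy)).neg) (neg_le_neg (min_le_left _ _)) ?_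
      intro y hy hρy
      have hρya : ρ y = a := by linarith
      have hFa : C < F a := fact2 a hma hap
      show -((1 - ρ y) * (F (ρ y) - C) / C) < 0
      rw [hρya, neg_lt_zero]
      exact div_pos (mul_pos (by linarith) (by linarith)) hC0
    have : -ρm ≤ -a := le_of_tendsto (hlim.neg)
      (Filter.eventually_atTop.mpr ⟨y₀, fun y hy => hbar y hy⟩)
    linarith
end

section
/- Let ρ_B¹, ρ_B², ρ_B³ ∈ [0,1] and define the demands/supply c¹ = F(ρ_B¹) if ρ_B¹ ≤ ρ* and c¹ = σ otherwise; c² = F(ρ_B²) if ρ_B² ≤ ρ* and c² = σ otherwise; c³ = σ if ρ_B³ ≤ ρ* and c³ = F(ρ_B³) otherwise. Define C¹ and C² by Cⁱ = cⁱ if c¹ + c² ≤ c³ and Cⁱ = min(cⁱ, c³ − min(c¹, c², c³/2)) otherwise, and C³ = C¹ + C². Then the fluxes of the fair-merging coupling conditions are reproduced in each of the eight boundary configurations: (1) if ρ_B¹ ≥ ρ*, ρ_B² ≥ ρ*, ρ_B³ ≤ ρ* then (C¹,C²,C³) = (σ/2, σ/2, σ); (2) if ρ_B¹ ≥ ρ*,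 ρ_B² ≥ ρ*, ρ_B³ ≥ ρ* then (C¹,C²,C³) = (F(ρ_B³)/2, F(ρ_B³)/2, F(ρ_B³)); (3) if ρ_B¹ ≥ ρ*, ρ_B² ≤ ρ*, ρ_B³ ≤ ρ* then (C¹,C²,C³) = (σ/2, σ/2, σ) when F(ρ_B²) ≥ σ/2 and (σ − F(ρ_B²), F(ρ_B²), σ) when F(ρ_B²) ≤ σ/2; (4) symmetrically in roads 1 and 2; (5) if ρ_B¹ ≥ ρ*, ρ_B² ≤ ρ*, ρ_B³ ≥ ρ* then (C¹,C²,C³) = (F(ρ_B³)/2, F(ρ_B³)/2, F(ρ_B³)) when F(ρ_B³) ≤ 2F(ρ_B²) and (F(ρ_B³) − F(ρ_B²), F(ρ_B²), F(ρ_B³)) when F(ρ_B³) ≥ 2F(ρ_B²); (6) symmetrically in roads 1 and 2; (7) if ρ_B¹ ≤ ρ*, ρ_B² ≤ ρ*, ρ_B³ ≤ ρ* then (C¹,C²,C³) = (F(ρ_B¹), F(ρ_B²), F(ρ_B¹)+F(ρ_B²)) when F(ρ_B¹)+F(ρ_B²) ≤ σ, (σ/2, σ/2, σ) when F(ρ_B¹)+F(ρ_B²)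 ≥ σ and F(ρ_B¹), F(ρ_B²) ≥ σ/2, (σ − F(ρ_B²), F(ρ_B²), σ) when F(ρ_B¹)+F(ρ_B²) ≥ σ, F(ρ_B¹) ≥ σ/2 ≥ F(ρ_B²), and (F(ρ_B¹), σ − F(ρ_B¹), σ) when F(ρ_B¹)+F(ρ_B²) ≥ σ, F(ρ_B²) ≥ σ/2 ≥ F(ρ_B¹); (8) if ρ_B¹ ≤ ρ*, ρ_B² ≤ ρ*, ρ_B³ ≥ ρ* then (C¹,C²,C³) = (F(ρ_B³)/2, F(ρ_B³)/2, F(ρ_B³)) when F(ρ_B³) ≤ 2F(ρ_B¹) and F(ρ_B³) ≤ 2F(ρ_B²), (F(ρ_B³) − F(ρ_B²), F(ρ_B²), F(ρ_B³)) when F(ρ_B³) ≥ 2F(ρ_B²) and F(ρ_B¹)+F(ρ_B²) ≥ F(ρ_B³), (F(ρ_B¹), F(ρ_B³) − F(ρ_B¹), F(ρ_B³)) when F(ρ_B³) ≥ 2F(ρ_B¹) and F(ρ_B¹)+F(ρ_B²) ≥ F(ρ_B³), and (F(ρ_B¹), F(ρ_B²), F(ρ_B¹)+F(ρ_B²)) when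 F(ρ_B¹)+F(ρ_B²) ≤ F(ρ_B³). -/
set_option maxHeartbeats 4000000 in
/-- The supply–demand formula reproduces the fluxes of the macroscopic
fair-merging coupling conditions in each of the eight boundary configurations
(Theorem "Macroscopic coupling conditions: Fair merging"). -/
theorem stmt18 (F : ℝ → ℝ) (ρstar σ : ℝ)
    (hcont : ContinuousOn F (Set.Icc 0 1))
    (hconc : StrictConcaveOn ℝ (Set.Icc 0 1) F)
    (h0 : F 0 = 0) (h1 : F 1 = 0)
    (hρstar : ρstar ∈ Set.Ioo (0 : ℝ) 1)
    (hmax : ∀ ρ ∈ Set.Icc (0 : ℝ) 1, ρ ≠ ρstar → F ρ < F ρstar)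
    (hσ : σ = F ρstar) (hσpos : 0 < σ)
    (ρB1 ρB2 ρB3 : ℝ)
    (hB1 : ρB1 ∈ Set.Icc (0 : ℝ) 1) (hB2 : ρB2 ∈ Set.Icc (0 : ℝ) 1)
    (hB3 : ρB3 ∈ Set.Icc (0 : ℝ) 1)
    (c1 c2 c3 C1 C2 C3 : ℝ)
    (hc1 : c1 = if ρB1 ≤ ρstar then F ρB1 else σ)
    (hc2 : c2 = if ρB2 ≤ ρstar then F ρB2 else σ)
    (hc3 : c3 = if ρB3 ≤ ρstar then σ else F ρB3)
    (hC1 : C1 = if c1 + c2 ≤ c3 then c1 else min c1 (c3 - min c1 (min c2 (c3 / 2))))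
    (hC2 : C2 = if c1 + c2 ≤ c3 then c2 else min c2 (c3 - min c1 (min c2 (c3 / 2))))
    (hC3 : C3 = C1 + C2) :
    -- Case 1, RP1-1-1
    (ρstar ≤ ρB1 → ρstar ≤ ρB2 → ρB3 ≤ ρstar →
      C1 = σ / 2 ∧ C2 = σ / 2 ∧ C3 = σ) ∧
    -- Case 2, RP1-1-2
    (ρstar ≤ ρB1 → ρstar ≤ ρB2 → ρstar ≤ ρB3 →
      C1 = F ρB3 / 2 ∧ C2 = F ρB3 / 2 ∧ C3 = F ρB3) ∧
    -- Case 3, RP1-2-1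
    (ρstar ≤ ρB1 → ρB2 ≤ ρstar → ρB3 ≤ ρstar →
      (σ / 2 ≤ F ρB2 → C1 = σ / 2 ∧ C2 = σ / 2 ∧ C3 = σ) ∧
      (F ρB2 ≤ σ / 2 → C1 = σ - F ρB2 ∧ C2 = F ρB2 ∧ C3 = σ)) ∧
    -- Case 4, RP2-1-1 (symmetric to Case 3)
    (ρB1 ≤ ρstar → ρstar ≤ ρB2 → ρB3 ≤ ρstar →
      (σ / 2 ≤ F ρB1 → C1 = σ / 2 ∧ C2 = σ / 2 ∧ C3 = σ) ∧
      (F ρB1 ≤ σ / 2 → C1 = F ρB1 ∧ C2 = σ - F ρB1 ∧ C3 = σ)) ∧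
    -- Case 5, RP1-2-2
    (ρstar ≤ ρB1 → ρB2 ≤ ρstar → ρstar ≤ ρB3 →
      (F ρB3 ≤ 2 * F ρB2 → C1 = F ρB3 / 2 ∧ C2 = F ρB3 / 2 ∧ C3 = F ρB3) ∧
      (2 * F ρB2 ≤ F ρB3 → C1 = F ρB3 - F ρB2 ∧ C2 = F ρB2 ∧ C3 = F ρB3)) ∧
    -- Case 6, RP2-1-2 (symmetric to Case 5)
    (ρB1 ≤ ρstar → ρstar ≤ ρB2 → ρstar ≤ ρB3 →
      (F ρB3 ≤ 2 * F ρB1 → C1 = F ρB3 / 2 ∧ C2 = F ρB3 / 2 ∧ C3 = F ρB3) ∧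
      (2 * F ρB1 ≤ F ρB3 → C1 = F ρB1 ∧ C2 = F ρB3 - F ρB1 ∧ C3 = F ρB3)) ∧
    -- Case 7, RP2-2-1
    (ρB1 ≤ ρstar → ρB2 ≤ ρstar → ρB3 ≤ ρstar →
      (F ρB1 + F ρB2 ≤ σ →
        C1 = F ρB1 ∧ C2 = F ρB2 ∧ C3 = F ρB1 + F ρB2) ∧
      (σ ≤ F ρB1 + F ρB2 → σ / 2 ≤ F ρB1 → σ / 2 ≤ F ρB2 →
        C1 = σ / 2 ∧ C2 = σ / 2 ∧ C3 = σ) ∧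
      (σ ≤ F ρB1 + F ρB2 → σ / 2 ≤ F ρB1 → F ρB2 ≤ σ / 2 →
        C1 = σ - F ρB2 ∧ C2 = F ρB2 ∧ C3 = σ) ∧
      (σ ≤ F ρB1 + F ρB2 → F ρB1 ≤ σ / 2 → σ / 2 ≤ F ρB2 →
        C1 = F ρB1 ∧ C2 = σ - F ρB1 ∧ C3 = σ)) ∧
    -- Case 8, RP2-2-2
    (ρB1 ≤ ρstar → ρB2 ≤ ρstar → ρstar ≤ ρB3 →
      (F ρB3 ≤ 2 * F ρB1 → F ρB3 ≤ 2 * F ρB2 →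
        C1 = F ρB3 / 2 ∧ C2 = F ρB3 / 2 ∧ C3 = F ρB3) ∧
      (2 * F ρB2 ≤ F ρB3 → F ρB3 ≤ F ρB1 + F ρB2 →
        C1 = F ρB3 - F ρB2 ∧ C2 = F ρB2 ∧ C3 = F ρB3) ∧
      (2 * F ρB1 ≤ F ρB3 → F ρB3 ≤ F ρB1 + F ρB2 →
        C1 = F ρB1 ∧ C2 = F ρB3 - F ρB1 ∧ C3 = F ρB3) ∧
      (F ρB1 + F ρB2 ≤ F ρB3 →
        C1 = F ρB1 ∧ C2 = F ρB2 ∧ C3 = F ρB1 + F ρB2)) := by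

  have hle : ∀ ρ ∈ Set.Icc (0:ℝ) 1, F ρ ≤ σ := by
    intro ρ hρ
    by_cases h : ρ = ρstar
    · rw [h, hσ]
    · exact (hmax ρ hρ h).le.trans_eq hσ.symm
  have hnn : ∀ ρ ∈ Set.Icc (0:ℝ) 1, 0 ≤ F ρ := by
    intro ρ hρ
    obtain ⟨ha, hb⟩ := hρ
    have h2 := hconc.concaveOn.2
    have := h2 (Set.left_mem_Icc.mpr one_pos.le)
      (Set.right_mem_Icc.mpr one_pos.le)
      (by linarith : (0:ℝ) ≤ 1 - ρ) ha (by ring : (1 - ρ) + ρ = 1)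
    simpa [h0, h1] using this
  have hFeq : ∀ ρ, ρstar ≤ ρ → ρ ≤ ρstar → F ρ = σ := by
    intro ρ ha hb; rw [le_antisymm hb ha, hσ]
  have e1 : ρstar ≤ ρB1 → c1 = σ := by
    intro h; rw [hc1]; split_ifs with h' <;> [exact hFeq _ h h'; rfl]
  have e2 : ρstar ≤ ρB2 → c2 = σ := by
    intro h; rw [hc2]; split_ifs with h' <;> [exact hFeq _ h h'; rfl]
  have e3lo : ρB3 ≤ ρstar → c3 = σ := by
    intro h; rw [hc3, if_pos h]
  have e3hi : ρstar ≤ ρB3 → c3 = F ρB3 := by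
    intro h; rw [hc3]; split_ifs with h' <;> [exact (hFeq _ h h').symm ▸ rfl; rfl]
  have f1le := hle _ hB1
  have f2le := hle _ hB2
  have f3le := hle _ hB3
  have f1nn := hnn _ hB1
  have f2nn := hnn _ hB2
  have f3nn := hnn _ hB3
  subst hC1 hC2 hC3
  refine ⟨?_, ?_, ?_, ?_, ?_, ?_, ?_, ?_⟩
  · intro h1 h2 h3
    rw [e1 h1, e2 h2, e3lo h3]
    simp only [min_def]
    split_ifs <;> refine ⟨by linarith, by linarith, by linarith⟩
  · intro h1 h2 h3
    rw [e1 h1, e2 h2, e3hi h3]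
    simp only [min_def]
    split_ifs <;> refine ⟨by linarith, by linarith, by linarith⟩
  · intro h1 h2 h3
    rw [e1 h1, hc2, if_pos h2, e3lo h3]
    constructor <;> intro h4 <;> simp only [min_def] <;>
      split_ifs <;> refine ⟨by linarith, by linarith, by linarith⟩
  · intro h1 h2 h3
    rw [hc1, if_pos h1, e2 h2, e3lo h3]
    constructor <;> intro h4 <;> simp only [min_def] <;>
      split_ifs <;> refine ⟨by linarith, by linarith, by linarith⟩
  · intro h1 h2 h3
    rw [e1 h1, hc2, if_pos h2, e3hi h3]
    constructor <;> intro h4 <;> simp only [min_def] <;>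
      split_ifs <;> refine ⟨by linarith, by linarith, by linarith⟩
  · intro h1 h2 h3
    rw [hc1, if_pos h1, e2 h2, e3hi h3]
    constructor <;> intro h4 <;> simp only [min_def] <;>
      split_ifs <;> refine ⟨by linarith, by linarith, by linarith⟩
  · intro h1 h2 h3
    rw [hc1, if_pos h1, hc2, if_pos h2, e3lo h3]
    refine ⟨?_, ?_, ?_, ?_⟩ <;> intro h4 <;>
      [skip; intro h5 h6; intro h5 h6; intro h5 h6] <;>
      simp only [min_def] <;>
      split_ifs <;> refine ⟨by linarith, by linarith, by linarith⟩
  · intro h1 h2 h3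
    rw [hc1, if_pos h1, hc2, if_pos h2, e3hi h3]
    refine ⟨?_, ?_, ?_, ?_⟩ <;> intro h4 <;>
      [intro h5; intro h5; intro h5; skip] <;>
      simp only [min_def] <;>
      split_ifs <;> refine ⟨by linarith, by linarith, by linarith⟩
end
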